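/- Let B₀, ..., B_ℓ: X → ℝ be a k-inductive interpolation-inspired barrier certificate (version 1) for a discrete-time stochastic system S, i.e., there exist 0 ≤ γ ≤ 1, ℓ ∈ ℕ, k ∈ ℕ_{≥1}, c ≥ 0, α_i > 0 (0 ≤ i < ℓ) such that: B_i ≥ 0 on X for 0 ≤ i ≤ ℓ; B₀ ≤ γ on X₀; B_i ≥ 1 on X_u for all i; E[B_{i+1}(f(x,w))|x] ≤ α_i B_i(x) on X \ X_u for 0 ≤ i < ℓ; E[B_ℓ(f(x,w))|x] ≤ B_ℓ(x) + c on X \ X_u; and E[B_ℓ(f^k(x,w_k))|x] ≤ B_ℓ(x) on X \ X_u. Then for every x₀ ∈ X₀, P{x_{x₀}(t) ∉ X_u for all t ∈ ℕ} ≥ 1 − γ(1 + k∏_{i=0}^{ℓ−1}α_i + ∑_{t=0}^{ℓ−2}∏_{i=0}^{t}α_i) − k(k−1)c/2. -/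

import Mathlib

/-!
Let `S_t` be the event that the trajectory avoids `Xu` at all times `s < t`, and
`e_t = E[B_{min(t,ℓ)}(x_t); S_t]`. Since `S_{t+1}` is `ℱ_t`-measurable and `x_t ∉ Xu` on it, the
Markov property turns the drift conditions into `e_{t+1} ≤ α_t e_t` for `t < ℓ`,
`e_{t+1} ≤ e_t + c` and `e_{t+k} + P(first hit at t) ≤ e_t` for `t ≥ ℓ`; moreover
`P(first hit at t) ≤ e_t` because `B ≥ 1` on `Xu`. Hence `e_t ≤ γ ∏_{i<t} α_i` for `t ≤ ℓ` and
`e_{ℓ+r} ≤ γ ∏_{i<ℓ} α_i + r c`. Along each residue class `ℓ + r + kℕ` the first-hit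
probabilities telescope to at most `e_{ℓ+r}`, and summing over `t < ℓ` and `r < k` bounds the
probability of ever reaching `Xu`.
-/

open MeasureTheory

/-- `iterNoise f n x w` is the `n`-fold composition `f^n(x, w)` of the transition map `f`,
fed with the noise vector `w = (w 0, …, w (n-1))`. -/
def iterNoise {X W : Type*} (f : X → W → X) : (n : ℕ) → X → (Fin n → W) → X
  | 0, x, _ => x
  | n + 1, x, w => f (iterNoise f n x fun i => w i.castSucc) (w (Fin.last n))

open Finset

theorem measurable_iterNoise {X W : Type*} [MeasurableSpace X] [MeasurableSpace W]
    {f : X → W → X} (hf : Measurable (Function.uncurry f)) (n : ℕ) :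
    Measurable (fun p : X × (Fin n → W) => iterNoise f n p.1 p.2) := by
  induction n with
  | zero => exact measurable_fst
  | succ n ih =>
    have hinit : Measurable (fun p : X × (Fin (n + 1) → W) =>
        iterNoise f n p.1 fun i => p.2 i.castSucc) :=
      ih.comp (measurable_fst.prodMk
        (measurable_pi_lambda _ fun i => (measurable_pi_apply _).comp measurable_snd))
    exact hf.comp (hinit.prodMk ((measurable_pi_apply _).comp measurable_snd))

theorem integral_iterNoise_one {X W : Type*} [MeasurableSpace W] (μW : Measure W)
    (f : X → W → X) (g : X → ℝ) (y : X) :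
    ∫ w, g (iterNoise f 1 y w) ∂(Measure.pi fun _ : Fin 1 => μW) = ∫ u, g (f y u) ∂μW :=
  (measurePreserving_funUnique μW (Fin 1)).integral_comp
    (MeasurableEquiv.funUnique (Fin 1) W).measurableEmbedding fun u => g (f y u)

section KernelTransfer

variable {Ω X V : Type*} {m mΩ : MeasurableSpace Ω} {μ : Measure Ω} [IsFiniteMeasure μ]
  [MeasurableSpace X] [MeasurableSpace V] {ν : Measure V} [IsFiniteMeasure ν]
  {Y : Ω → X} {Φ : Ω → V → X}

/-- Testing the conditional law against indicators identifies two measures on `X`; this is how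
a Markov property assumed only for bounded test functions reaches unbounded ones. -/
theorem map_restrict_eq_map_prod_of_condExp (hm : m ≤ mΩ) (hY : Measurable Y)
    (hΦ : Measurable (Function.uncurry Φ))
    (hcond : ∀ g : X → ℝ, Measurable g → (∃ C, ∀ y, |g y| ≤ C) →
      μ[(fun ω => g (Y ω))|m] =ᵐ[μ] fun ω => ∫ v, g (Φ ω v) ∂ν)
    {A : Set Ω} (hA : MeasurableSet[m] A) :
    (μ.restrict A).map Y = ((μ.restrict A).prod ν).map (Function.uncurry Φ) := by
  ext S hS
  have hΦS : MeasurableSet (Function.uncurry Φ ⁻¹' S) := hΦ hS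
  have hgS : Measurable (S.indicator (1 : X → ℝ)) := measurable_const.indicator hS
  have hbdd : ∀ y, |S.indicator (1 : X → ℝ) y| ≤ 1 := fun y => by
    by_cases hy : y ∈ S <;> simp [hy]
  have hslice : ∀ ω, ∫ v, S.indicator 1 (Φ ω v) ∂ν =
      ν.real (Prod.mk ω ⁻¹' (Function.uncurry Φ ⁻¹' S)) :=
    fun ω => integral_indicator_one (hΦ.comp measurable_prodMk_left hS)
  have hint : Integrable (fun ω => ν.real (Prod.mk ω ⁻¹' (Function.uncurry Φ ⁻¹' S)))
      (μ.restrict A) :=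
    .of_bound (measurable_measure_prodMk_left hΦS).ennreal_toReal.aestronglyMeasurable
      (ν.real Set.univ) (ae_of_all _ fun ω => by
        rw [Real.norm_eq_abs, abs_of_nonneg measureReal_nonneg]
        exact measureReal_mono (Set.subset_univ _))
  rw [Measure.map_apply hY hS, Measure.map_apply hΦ hS, Measure.prod_apply hΦS]
  calc μ.restrict A (Y ⁻¹' S) = ENNReal.ofReal (∫ ω in A, S.indicator 1 (Y ω) ∂μ) := by
        rw [← ofReal_measureReal, ← integral_indicator_one (hY hS)]; rfl
    _ = ENNReal.ofReal (∫ ω in A, ∫ v, S.indicator 1 (Φ ω v) ∂ν ∂μ) := by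
        rw [← setIntegral_condExp (f := fun ω => S.indicator 1 (Y ω)) hm
          (.of_bound (hgS.comp hY).aestronglyMeasurable 1 (ae_of_all _ fun ω => hbdd (Y ω))) hA]
        exact congrArg _ (integral_congr_ae (ae_restrict_of_ae (hcond _ hgS ⟨1, hbdd⟩)))
    _ = ∫⁻ ω in A, ν (Prod.mk ω ⁻¹' (Function.uncurry Φ ⁻¹' S)) ∂μ := by
        simp_rw [hslice]
        rw [ofReal_integral_eq_lintegral_ofReal hint (ae_of_all _ fun _ => measureReal_nonneg)]
        exact lintegral_congr fun ω => ofReal_measureReal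

theorem setIntegral_le_of_condExp_eq_integral (hm : m ≤ mΩ) (hY : Measurable Y)
    (hΦ : Measurable (Function.uncurry Φ))
    (hcond : ∀ g : X → ℝ, Measurable g → (∃ C, ∀ y, |g y| ≤ C) →
      μ[(fun ω => g (Y ω))|m] =ᵐ[μ] fun ω => ∫ v, g (Φ ω v) ∂ν)
    {A : Set Ω} (hA : MeasurableSet[m] A) {h : X → ℝ} (hh : Measurable h)
    (hint : Integrable (fun ω => h (Y ω)) μ) {b : Ω → ℝ} (hb : Integrable b μ)
    (hbound : ∀ ω ∈ A, ∫ v, h (Φ ω v) ∂ν ≤ b ω) :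
    ∫ ω in A, h (Y ω) ∂μ ≤ ∫ ω in A, b ω ∂μ := by
  have hmap := map_restrict_eq_map_prod_of_condExp hm hY hΦ hcond hA
  have hintΦ : Integrable (h ∘ Function.uncurry Φ) ((μ.restrict A).prod ν) := by
    rw [← integrable_map_measure hh.aestronglyMeasurable hΦ.aemeasurable, ← hmap,
      integrable_map_measure hh.aestronglyMeasurable hY.aemeasurable]
    exact hint.restrict
  calc ∫ ω in A, h (Y ω) ∂μ = ∫ y, h y ∂(μ.restrict A).map Y :=
        (integral_map hY.aemeasurable hh.aestronglyMeasurable).symm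
    _ = ∫ p, h (Function.uncurry Φ p) ∂(μ.restrict A).prod ν := by
        rw [hmap, integral_map hΦ.aemeasurable hh.aestronglyMeasurable]
    _ = ∫ ω in A, ∫ v, h (Φ ω v) ∂ν ∂μ := integral_prod _ hintΦ
    _ ≤ ∫ ω in A, b ω ∂μ :=
        setIntegral_mono_on hintΦ.integral_prod_left hb.integrableOn (hm _ hA) hbound

end KernelTransfer

theorem sum_range_add_mul_le_of_add_le {p e : ℕ → ℝ} {ℓ k : ℕ}
    (hstep : ∀ t, ℓ ≤ t → e (t + k) + p t ≤ e t) (N : ℕ) :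
    ∑ t ∈ range (ℓ + N * k), p t + ∑ r ∈ range k, e (ℓ + N * k + r) ≤
      ∑ t ∈ range ℓ, p t + ∑ r ∈ range k, e (ℓ + r) := by
  induction N with
  | zero => simp
  | succ N ih =>
    have hblock : ∑ r ∈ range k, p (ℓ + N * k + r) + ∑ r ∈ range k, e (ℓ + N * k + k + r) ≤
        ∑ r ∈ range k, e (ℓ + N * k + r) := by
      rw [← sum_add_distrib]
      refine sum_le_sum fun r _ => ?_
      have h := hstep (ℓ + N * k + r) (by omega)
      rw [show ℓ + N * k + r + k = ℓ + N * k + k + r by ring] at h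
      linarith
    rw [show ℓ + (N + 1) * k = ℓ + N * k + k by ring, sum_range_add]
    linarith

theorem sum_range_le_of_add_le {p e : ℕ → ℝ} {ℓ k : ℕ} (hk : 1 ≤ k) (hp : ∀ t, 0 ≤ p t)
    (he : ∀ t, 0 ≤ e t) (hstep : ∀ t, ℓ ≤ t → e (t + k) + p t ≤ e t) (n : ℕ) :
    ∑ t ∈ range n, p t ≤ ∑ t ∈ range ℓ, p t + ∑ r ∈ range k, e (ℓ + r) :=
  calc ∑ t ∈ range n, p t ≤ ∑ t ∈ range (ℓ + n * k), p t :=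
        sum_le_sum_of_subset_of_nonneg (range_subset_range.2 (by nlinarith))
          fun t _ _ => hp t
    _ ≤ ∑ t ∈ range (ℓ + n * k), p t + ∑ r ∈ range k, e (ℓ + n * k + r) :=
        le_add_of_nonneg_right (sum_nonneg fun r _ => he _)
    _ ≤ _ := sum_range_add_mul_le_of_add_le hstep n

section SurvivalSet

variable {Ω X : Type*} {x : ℕ → Ω → X} {Xu : Set X}

def survivalSet (x : ℕ → Ω → X) (Xu : Set X) (t : ℕ) : Set Ω := ⋂ s < t, x s ⁻¹' Xuᶜ

def firstHit (x : ℕ → Ω → X) (Xu : Set X) (t : ℕ) : Set Ω := survivalSet x Xu t ∩ x t ⁻¹' Xu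

theorem survivalSet_zero : survivalSet x Xu 0 = Set.univ := by
  simp [survivalSet]

theorem notMem_of_mem_survivalSet {s t : ℕ} {ω : Ω} (hω : ω ∈ survivalSet x Xu t)
    (hst : s < t) : x s ω ∉ Xu :=
  Set.mem_iInter₂.1 hω s hst

theorem survivalSet_succ (t : ℕ) :
    survivalSet x Xu (t + 1) = survivalSet x Xu t \ x t ⁻¹' Xu := by
  ext ω
  simp only [survivalSet, Set.mem_iInter, Set.mem_sdiff, Set.mem_preimage, Set.mem_compl_iff,
    Nat.lt_succ_iff_lt_or_eq, or_imp, forall_and, forall_eq]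

theorem survivalSet_antitone : Antitone (survivalSet x Xu) := fun _ _ hst _ hω =>
  Set.mem_iInter₂.2 fun _ hs => notMem_of_mem_survivalSet hω (hs.trans_le hst)

theorem iUnion_preimage_subset_iUnion_firstHit : ⋃ t, x t ⁻¹' Xu ⊆ ⋃ t, firstHit x Xu t := by
  classical
  intro ω hω
  rw [Set.mem_iUnion] at hω
  exact Set.mem_iUnion.2 ⟨Nat.find hω,
    Set.mem_iInter₂.2 fun s hs => Nat.find_min hω hs, Nat.find_spec hω⟩

theorem measurableSet_survivalSet [MeasurableSpace X] {mΩ : MeasurableSpace Ω}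
    {ℱ : Filtration ℕ mΩ} (hadapted : ∀ t, Measurable[ℱ t] (x t)) (hXu : MeasurableSet Xu)
    {t u : ℕ} (htu : t ≤ u + 1) : MeasurableSet[ℱ u] (survivalSet x Xu t) :=
  .iInter fun s => .iInter fun hs => ℱ.mono (by omega) _ (hadapted s hXu.compl)

theorem setIntegral_survivalSet_succ_add_setIntegral_firstHit [MeasurableSpace X]
    {mΩ : MeasurableSpace Ω} {μ : Measure Ω} {t : ℕ} (hxt : Measurable (x t))
    (hXu : MeasurableSet Xu) {g : Ω → ℝ} (hg : Integrable g μ) :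
    ∫ ω in survivalSet x Xu (t + 1), g ω ∂μ + ∫ ω in firstHit x Xu t, g ω ∂μ =
      ∫ ω in survivalSet x Xu t, g ω ∂μ := by
  rw [survivalSet_succ, add_comm]
  exact integral_inter_add_sdiff (hxt hXu) hg.integrableOn

end SurvivalSet

section Barrier

variable {Ω X W : Type*} {mΩ : MeasurableSpace Ω} [MeasurableSpace X] [MeasurableSpace W]
  {μ : Measure Ω} {μW : Measure W} {f : X → W → X} {x : ℕ → Ω → X} {ℱ : Filtration ℕ mΩ}
  {Xs X0 Xu : Set X} {ℓ k : ℕ} {γ c : ℝ} {B : ℕ → X → ℝ} {α : ℕ → ℝ}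

structure IsSolution (μ : Measure Ω) (μW : Measure W) (Xs : Set X) (f : X → W → X)
    (x : ℕ → Ω → X) (ℱ : Filtration ℕ mΩ) : Prop where
  adapted : ∀ t, Measurable[ℱ t] (x t)
  mem : ∀ t ω, x t ω ∈ Xs
  condExp_eq : ∀ (t n : ℕ) (g : X → ℝ), Measurable g → (∃ C, ∀ y, |g y| ≤ C) →
    μ[(fun ω => g (x (t + n) ω))|ℱ t] =ᵐ[μ]
      fun ω => ∫ w, g (iterNoise f n (x t ω) w) ∂(Measure.pi fun _ : Fin n => μW)

theorem IsSolution.measurable (hx : IsSolution μ μW Xs f x ℱ) (t : ℕ) : Measurable (x t) :=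
  (hx.adapted t).mono (ℱ.le t) le_rfl

/-- Definition 3.5 (k-inductive interpolation-inspired barrier certificate, version 1), without
the constraints on the scalar parameters. -/
structure IsKInductiveBarrier (μW : Measure W) (Xs X0 Xu : Set X) (f : X → W → X) (ℓ k : ℕ)
    (γ c : ℝ) (B : ℕ → X → ℝ) (α : ℕ → ℝ) : Prop where
  measurable : ∀ i, Measurable (B i)
  nonneg : ∀ i ≤ ℓ, ∀ x ∈ Xs, 0 ≤ B i x
  le_of_mem_init : ∀ x ∈ X0, B 0 x ≤ γ
  one_le_of_mem_Xu : ∀ i ≤ ℓ, ∀ x ∈ Xu, 1 ≤ B i x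
  integral_succ_le : ∀ i < ℓ, ∀ x ∈ Xs \ Xu, ∫ w, B (i + 1) (f x w) ∂μW ≤ α i * B i x
  integral_le_add : ∀ x ∈ Xs \ Xu, ∫ w, B ℓ (f x w) ∂μW ≤ B ℓ x + c
  integral_iterNoise_le : ∀ x ∈ Xs \ Xu,
    ∫ w, B ℓ (iterNoise f k x w) ∂(Measure.pi fun _ : Fin k => μW) ≤ B ℓ x

noncomputable def barrierValue (μ : Measure Ω) (x : ℕ → Ω → X) (Xu : Set X) (B : ℕ → X → ℝ)
    (ℓ t : ℕ) : ℝ :=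
  ∫ ω in survivalSet x Xu t, B (min t ℓ) (x t ω) ∂μ

theorem setIntegral_survivalSet_succ_le [IsFiniteMeasure μ] [IsFiniteMeasure μW]
    (hx : IsSolution μ μW Xs f x ℱ) (hXu : MeasurableSet Xu)
    (hf : Measurable (Function.uncurry f)) {t n : ℕ} {D b : X → ℝ} (hD : Measurable D)
    (hDint : Integrable (fun ω => D (x (t + n) ω)) μ)
    (hbint : Integrable (fun ω => b (x t ω)) μ)
    (hDb : ∀ y ∈ Xs \ Xu, ∫ w, D (iterNoise f n y w) ∂(Measure.pi fun _ : Fin n => μW) ≤ b y) :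
    ∫ ω in survivalSet x Xu (t + 1), D (x (t + n) ω) ∂μ ≤
      ∫ ω in survivalSet x Xu (t + 1), b (x t ω) ∂μ :=
  setIntegral_le_of_condExp_eq_integral (Φ := fun ω w => iterNoise f n (x t ω) w) (ℱ.le t)
    (hx.measurable _)
    ((measurable_iterNoise hf n).comp ((hx.measurable t).prodMap measurable_id))
    (hx.condExp_eq t n) (measurableSet_survivalSet hx.adapted hXu le_rfl) hD hDint hbint
    fun ω hω => hDb _ ⟨hx.mem t ω, notMem_of_mem_survivalSet hω t.lt_succ_self⟩

theorem setIntegral_survivalSet_succ_add_measureReal_firstHit_le [IsFiniteMeasure μ]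
    (hB : IsKInductiveBarrier μW Xs X0 Xu f ℓ k γ c B α) (hx : IsSolution μ μW Xs f x ℱ)
    (hXu : MeasurableSet Xu) (hintB : ∀ i t, Integrable (fun ω => B i (x t ω)) μ)
    {i t : ℕ} (hi : i ≤ ℓ) :
    ∫ ω in survivalSet x Xu (t + 1), B i (x t ω) ∂μ + μ.real (firstHit x Xu t) ≤
      ∫ ω in survivalSet x Xu t, B i (x t ω) ∂μ := by
  rw [← setIntegral_survivalSet_succ_add_setIntegral_firstHit (hx.measurable t) hXu (hintB i t)]
  have hmeas : MeasurableSet (firstHit x Xu t) :=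
    (ℱ.le t _ (measurableSet_survivalSet hx.adapted hXu t.le_succ)).inter (hx.measurable t hXu)
  gcongr
  calc μ.real (firstHit x Xu t) = ∫ _ in firstHit x Xu t, (1 : ℝ) ∂μ := by simp
    _ ≤ ∫ ω in firstHit x Xu t, B i (x t ω) ∂μ :=
        setIntegral_mono_on (integrableOn_const (measure_ne_top _ _)) (hintB i t).integrableOn
          hmeas fun ω hω => hB.one_le_of_mem_Xu i hi _ hω.2

theorem setIntegral_survivalSet_succ_le_barrierValue [IsFiniteMeasure μ]
    (hB : IsKInductiveBarrier μW Xs X0 Xu f ℓ k γ c B α) (hx : IsSolution μ μW Xs f x ℱ)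
    (hXu : MeasurableSet Xu) (hintB : ∀ i t, Integrable (fun ω => B i (x t ω)) μ) (t : ℕ) :
    ∫ ω in survivalSet x Xu (t + 1), B (min t ℓ) (x t ω) ∂μ ≤ barrierValue μ x Xu B ℓ t :=
  le_of_add_le_of_nonneg_left
    (setIntegral_survivalSet_succ_add_measureReal_firstHit_le hB hx hXu hintB (min_le_right _ _))
    measureReal_nonneg

theorem barrierValue_nonneg (hB : IsKInductiveBarrier μW Xs X0 Xu f ℓ k γ c B α)
    (hx : IsSolution μ μW Xs f x ℱ) (t : ℕ) : 0 ≤ barrierValue μ x Xu B ℓ t :=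
  integral_nonneg fun ω => hB.nonneg _ (min_le_right _ _) _ (hx.mem t ω)

theorem measureReal_firstHit_le_barrierValue [IsFiniteMeasure μ]
    (hB : IsKInductiveBarrier μW Xs X0 Xu f ℓ k γ c B α) (hx : IsSolution μ μW Xs f x ℱ)
    (hXu : MeasurableSet Xu) (hintB : ∀ i t, Integrable (fun ω => B i (x t ω)) μ) (t : ℕ) :
    μ.real (firstHit x Xu t) ≤ barrierValue μ x Xu B ℓ t :=
  le_of_add_le_of_nonneg_right
    (setIntegral_survivalSet_succ_add_measureReal_firstHit_le hB hx hXu hintB (min_le_right _ _))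
    (integral_nonneg fun ω => hB.nonneg _ (min_le_right _ _) _ (hx.mem t ω))

theorem barrierValue_zero_le [IsProbabilityMeasure μ]
    (hB : IsKInductiveBarrier μW Xs X0 Xu f ℓ k γ c B α) {x0 : X} (hx0 : x0 ∈ X0)
    (hinit : ∀ ω, x 0 ω = x0) : barrierValue μ x Xu B ℓ 0 ≤ γ := by
  simpa [barrierValue, survivalSet_zero, hinit] using hB.le_of_mem_init x0 hx0

section Recursion

variable [IsProbabilityMeasure μ] [IsFiniteMeasure μW]
  (hB : IsKInductiveBarrier μW Xs X0 Xu f ℓ k γ c B α) (hx : IsSolution μ μW Xs f x ℱ)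
  (hXu : MeasurableSet Xu) (hf : Measurable (Function.uncurry f))
  (hintB : ∀ i t, Integrable (fun ω => B i (x t ω)) μ)

include hB hx hXu hf hintB

theorem barrierValue_succ_le_mul {t : ℕ} (ht : t < ℓ) (hαt : 0 ≤ α t) :
    barrierValue μ x Xu B ℓ (t + 1) ≤ α t * barrierValue μ x Xu B ℓ t := by
  have hstep := setIntegral_survivalSet_succ_le (b := fun y => α t * B t y) hx hXu hf
    (hB.measurable (t + 1)) (hintB (t + 1) (t + 1)) ((hintB t t).const_mul (α t)) fun y hy => by
      rw [integral_iterNoise_one]; exact hB.integral_succ_le t ht y hy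
  have hsurv := setIntegral_survivalSet_succ_le_barrierValue hB hx hXu hintB t
  rw [min_eq_left ht.le] at hsurv
  calc barrierValue μ x Xu B ℓ (t + 1)
        = ∫ ω in survivalSet x Xu (t + 1), B (t + 1) (x (t + 1) ω) ∂μ := by
          rw [barrierValue, min_eq_left ht]
    _ ≤ ∫ ω in survivalSet x Xu (t + 1), α t * B t (x t ω) ∂μ := hstep
    _ = α t * ∫ ω in survivalSet x Xu (t + 1), B t (x t ω) ∂μ := integral_const_mul _ _
    _ ≤ α t * barrierValue μ x Xu B ℓ t := by gcongr

theorem barrierValue_succ_le_add {t : ℕ} (ht : ℓ ≤ t) (hc : 0 ≤ c) :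
    barrierValue μ x Xu B ℓ (t + 1) ≤ barrierValue μ x Xu B ℓ t + c := by
  have hstep := setIntegral_survivalSet_succ_le (b := fun y => B ℓ y + c) hx hXu hf
    (hB.measurable ℓ) (hintB ℓ (t + 1)) ((hintB ℓ t).add (integrable_const c)) fun y hy => by
      rw [integral_iterNoise_one]; exact hB.integral_le_add y hy
  have hsurv := setIntegral_survivalSet_succ_le_barrierValue hB hx hXu hintB t
  rw [min_eq_right ht] at hsurv
  calc barrierValue μ x Xu B ℓ (t + 1)
        = ∫ ω in survivalSet x Xu (t + 1), B ℓ (x (t + 1) ω) ∂μ := by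
          rw [barrierValue, min_eq_right (ht.trans t.le_succ)]
    _ ≤ ∫ ω in survivalSet x Xu (t + 1), (B ℓ (x t ω) + c) ∂μ := hstep
    _ = ∫ ω in survivalSet x Xu (t + 1), B ℓ (x t ω) ∂μ +
          μ.real (survivalSet x Xu (t + 1)) * c := by
          rw [integral_add (hintB ℓ t).integrableOn (integrable_const c), setIntegral_const,
            smul_eq_mul]
    _ ≤ barrierValue μ x Xu B ℓ t + c :=
          add_le_add hsurv (mul_le_of_le_one_left hc measureReal_le_one)

theorem barrierValue_add_add_measureReal_firstHit_le {t : ℕ} (ht : ℓ ≤ t) (hk : 1 ≤ k) :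
    barrierValue μ x Xu B ℓ (t + k) + μ.real (firstHit x Xu t) ≤
      barrierValue μ x Xu B ℓ t := by
  have hstep := setIntegral_survivalSet_succ_le hx hXu hf (hB.measurable ℓ)
    (hintB ℓ (t + k)) (hintB ℓ t) hB.integral_iterNoise_le
  have hsplit := setIntegral_survivalSet_succ_add_measureReal_firstHit_le hB hx hXu hintB
    (t := t) le_rfl
  have hshrink : ∫ ω in survivalSet x Xu (t + k), B ℓ (x (t + k) ω) ∂μ ≤
      ∫ ω in survivalSet x Xu (t + 1), B ℓ (x (t + k) ω) ∂μ :=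
    setIntegral_mono_set (hintB ℓ (t + k)).integrableOn
      (ae_of_all _ fun ω => hB.nonneg ℓ le_rfl _ (hx.mem _ ω))
      (survivalSet_antitone (by omega : t + 1 ≤ t + k)).eventuallyLE
  rw [barrierValue, barrierValue, min_eq_right (by omega : ℓ ≤ t + k), min_eq_right ht]
  linarith

theorem barrierValue_le_prod (hα : ∀ i < ℓ, 0 ≤ α i) {x0 : X} (hx0 : x0 ∈ X0)
    (hinit : ∀ ω, x 0 ω = x0) :
    ∀ t ≤ ℓ, barrierValue μ x Xu B ℓ t ≤ γ * ∏ i ∈ range t, α i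
  | 0, _ => by simpa using barrierValue_zero_le hB hx0 hinit
  | t + 1, ht => calc
      barrierValue μ x Xu B ℓ (t + 1) ≤ α t * barrierValue μ x Xu B ℓ t :=
        barrierValue_succ_le_mul hB hx hXu hf hintB ht (hα t ht)
      _ ≤ α t * (γ * ∏ i ∈ range t, α i) := by
        gcongr
        · exact hα t ht
        · exact barrierValue_le_prod hα hx0 hinit t (by omega)
      _ = γ * ∏ i ∈ range (t + 1), α i := by rw [prod_range_succ]; ring

theorem barrierValue_add_le (hα : ∀ i < ℓ, 0 ≤ α i) (hc : 0 ≤ c) {x0 : X} (hx0 : x0 ∈ X0)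
    (hinit : ∀ ω, x 0 ω = x0) (r : ℕ) :
    barrierValue μ x Xu B ℓ (ℓ + r) ≤ γ * ∏ i ∈ range ℓ, α i + r * c := by
  induction r with
  | zero => simpa using barrierValue_le_prod hB hx hXu hf hintB hα hx0 hinit ℓ le_rfl
  | succ r ih =>
    have hstep := barrierValue_succ_le_add hB hx hXu hf hintB (t := ℓ + r) (by omega) hc
    rw [← add_assoc]
    push_cast
    linarith

theorem measure_iUnion_firstHit_le (hk : 1 ≤ k) (hα : ∀ i < ℓ, 0 ≤ α i) (hc : 0 ≤ c)
    {x0 : X} (hx0 : x0 ∈ X0) (hinit : ∀ ω, x 0 ω = x0) :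
    μ (⋃ t, firstHit x Xu t) ≤ ENNReal.ofReal (∑ t ∈ range ℓ, γ * ∏ i ∈ range t, α i +
      ∑ r ∈ range k, (γ * ∏ i ∈ range ℓ, α i + r * c)) := by
  have hsum (n : ℕ) : ∑ t ∈ range n, μ.real (firstHit x Xu t) ≤ ∑ t ∈ range ℓ,
      γ * ∏ i ∈ range t, α i + ∑ r ∈ range k, (γ * ∏ i ∈ range ℓ, α i + r * c) :=
    (sum_range_le_of_add_le hk (fun _ => measureReal_nonneg) (barrierValue_nonneg hB hx)
      (fun t ht => barrierValue_add_add_measureReal_firstHit_le hB hx hXu hf hintB ht hk)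
      n).trans <| add_le_add
        (sum_le_sum fun t ht => (measureReal_firstHit_le_barrierValue hB hx hXu hintB t).trans
          (barrierValue_le_prod hB hx hXu hf hintB hα hx0 hinit t (mem_range.1 ht).le))
        (sum_le_sum fun r _ => barrierValue_add_le hB hx hXu hf hintB hα hc hx0 hinit r)
  refine (measure_iUnion_le _).trans (ENNReal.tsum_le_of_sum_range_le fun n => ?_)
  calc ∑ t ∈ range n, μ (firstHit x Xu t)
      = ENNReal.ofReal (∑ t ∈ range n, μ.real (firstHit x Xu t)) := by
        rw [ENNReal.ofReal_sum_of_nonneg fun _ _ => measureReal_nonneg]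
        exact sum_congr rfl fun t _ => (ofReal_measureReal (measure_ne_top _ _)).symm
    _ ≤ _ := ENNReal.ofReal_le_ofReal (hsum n)

end Recursion

end Barrier

theorem sum_mul_prod_add_sum_le (α : ℕ → ℝ) (ℓ k : ℕ) {γ : ℝ} (c : ℝ) (hγ : 0 ≤ γ) :
    ∑ t ∈ range ℓ, γ * ∏ i ∈ range t, α i + ∑ r ∈ range k, (γ * ∏ i ∈ range ℓ, α i + r * c) ≤
      γ * (1 + k * ∏ i ∈ range ℓ, α i + ∑ t ∈ range (ℓ - 1), ∏ i ∈ range (t + 1), α i) +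
        k * (k - 1) * c / 2 := by
  have hgauss : ∑ r ∈ range k, (r : ℝ) = k * (k - 1) / 2 := by
    induction k with
    | zero => simp
    | succ k ih => rw [sum_range_succ, ih]; push_cast; ring
  have hprods : ∑ t ∈ range ℓ, ∏ i ∈ range t, α i ≤
      1 + ∑ t ∈ range (ℓ - 1), ∏ i ∈ range (t + 1), α i := by
    cases ℓ with
    | zero => simp
    | succ n => rw [sum_range_succ', add_comm]; simp
  have := mul_le_mul_of_nonneg_left hprods hγ
  rw [← mul_sum, sum_add_distrib, sum_const, card_range, nsmul_eq_mul, ← sum_mul, hgauss]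
  linarith

theorem stmt_11_general {Ω : Type*} {m : MeasurableSpace Ω} (μ : Measure Ω) [IsProbabilityMeasure μ]
    {X : Type*} [MeasurableSpace X] {W : Type*} [MeasurableSpace W]
    (μW : Measure W) [IsProbabilityMeasure μW]
    (Xs X0 Xu : Set X) (hXu : MeasurableSet Xu)
    (f : X → W → X) (hf : Measurable (Function.uncurry f))
    (ℓ : ℕ) (k : ℕ) (hk : 1 ≤ k)
    (γ c : ℝ) (hγ0 : 0 ≤ γ) (hc : 0 ≤ c)
    (B : ℕ → X → ℝ) (hBmeas : ∀ i, Measurable (B i))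
    (α : ℕ → ℝ) (hα : ∀ i < ℓ, 0 < α i)
    -- k-IBC v1 conditions (Definition 3.5)
    (hB0 : ∀ i ≤ ℓ, ∀ x ∈ Xs, 0 ≤ B i x)
    (hBinit : ∀ x ∈ X0, B 0 x ≤ γ)
    (hBunsafe : ∀ i ≤ ℓ, ∀ x ∈ Xu, 1 ≤ B i x)
    (hBstep : ∀ i < ℓ, ∀ x ∈ Xs \ Xu, ∫ w, B (i + 1) (f x w) ∂μW ≤ α i * B i x)
    (hBcmart : ∀ x ∈ Xs \ Xu, ∫ w, B ℓ (f x w) ∂μW ≤ B ℓ x + c)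
    (hBksuper : ∀ x ∈ Xs \ Xu,
      ∫ w, B ℓ (iterNoise f k x w) ∂(Measure.pi fun _ : Fin k => μW) ≤ B ℓ x)
    -- the solution process starting from x0 ∈ X0
    (x0 : X) (hx0 : x0 ∈ X0)
    (x : ℕ → Ω → X) (ℱ : Filtration ℕ m)
    (hadapted : ∀ t, Measurable[ℱ t] (x t))
    (hinit : ∀ ω, x 0 ω = x0)
    (hinv : ∀ t ω, x t ω ∈ Xs)
    (hintB : ∀ i t, Integrable (fun ω => B i (x t ω)) μ)
    (hMarkov : ∀ (t n : ℕ) (g : X → ℝ), Measurable g → (∃ C, ∀ y, |g y| ≤ C) →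
      μ[(fun ω => g (x (t + n) ω))|ℱ t] =ᵐ[μ]
        fun ω => ∫ w, g (iterNoise f n (x t ω) w) ∂(Measure.pi fun _ : Fin n => μW)) :
    ENNReal.ofReal (1 - γ * (1 + (k : ℝ) * ∏ i ∈ Finset.range ℓ, α i +
        ∑ t ∈ Finset.range (ℓ - 1), ∏ i ∈ Finset.range (t + 1), α i) -
        (k : ℝ) * ((k : ℝ) - 1) * c / 2) ≤
      μ {ω | ∀ t, x t ω ∉ Xu} := by
  have hx : IsSolution μ μW Xs f x ℱ := ⟨hadapted, hinv, hMarkov⟩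
  have hB : IsKInductiveBarrier μW Xs X0 Xu f ℓ k γ c B α :=
    ⟨hBmeas, hB0, hBinit, hBunsafe, hBstep, hBcmart, hBksuper⟩
  have hα₀ : ∀ i < ℓ, 0 ≤ α i := fun i hi => (hα i hi).le
  set R := ∑ t ∈ range ℓ, γ * ∏ i ∈ range t, α i +
    ∑ r ∈ range k, (γ * ∏ i ∈ range ℓ, α i + r * c)
  have hprod : ∀ t ≤ ℓ, 0 ≤ ∏ i ∈ range t, α i := fun t ht =>
    prod_nonneg fun i hi => hα₀ i ((mem_range.1 hi).trans_le ht)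
  have hR : 0 ≤ R := add_nonneg
    (sum_nonneg fun t ht => mul_nonneg hγ0 (hprod t (mem_range.1 ht).le))
    (sum_nonneg fun r _ => add_nonneg (mul_nonneg hγ0 (hprod ℓ le_rfl)) (by positivity))
  have hfail : μ (⋃ t, x t ⁻¹' Xu) ≤ ENNReal.ofReal R :=
    (measure_mono iUnion_preimage_subset_iUnion_firstHit).trans
      (measure_iUnion_firstHit_le hB hx hXu hf hintB hk hα₀ hc hx0 hinit)
  have hsafe : {ω | ∀ t, x t ω ∉ Xu} = (⋃ t, x t ⁻¹' Xu)ᶜ := by ext; simp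
  rw [hsafe, prob_compl_eq_one_sub (.iUnion fun t => hx.measurable t hXu)]
  calc _ ≤ ENNReal.ofReal (1 - R) :=
        ENNReal.ofReal_le_ofReal (by linarith [sum_mul_prod_add_sum_le α ℓ k c hγ0])
    _ = 1 - ENNReal.ofReal R := by rw [ENNReal.ofReal_sub 1 hR, ENNReal.ofReal_one]
    _ ≤ 1 - μ (⋃ t, x t ⁻¹' Xu) := tsub_le_tsub_left hfail 1

/-- Theorem 3.6: a `k`-inductive interpolation-inspired barrier certificate (version 1)
implies safety with probability at least
`1 - γ (1 + k ∏_{i<ℓ} α_i + ∑_{t=0}^{ℓ-2} ∏_{i=0}^{t} α_i) - k(k-1)c/2`. -/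
theorem stmt_11 {Ω : Type*} {m : MeasurableSpace Ω} (μ : Measure Ω) [IsProbabilityMeasure μ]
    {X : Type*} [MeasurableSpace X] {W : Type*} [MeasurableSpace W]
    (μW : Measure W) [IsProbabilityMeasure μW]
    (Xs X0 Xu : Set X) (hX0sub : X0 ⊆ Xs) (hXusub : Xu ⊆ Xs) (hXu : MeasurableSet Xu)
    (f : X → W → X) (hf : Measurable (Function.uncurry f))
    (ℓ : ℕ) (k : ℕ) (hk : 1 ≤ k)
    (γ c : ℝ) (hγ0 : 0 ≤ γ) (hγ1 : γ ≤ 1) (hc : 0 ≤ c)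
    (B : ℕ → X → ℝ) (hBmeas : ∀ i, Measurable (B i))
    (α : ℕ → ℝ) (hα : ∀ i < ℓ, 0 < α i)
    -- k-IBC v1 conditions (Definition 3.5)
    (hB0 : ∀ i ≤ ℓ, ∀ x ∈ Xs, 0 ≤ B i x)
    (hBinit : ∀ x ∈ X0, B 0 x ≤ γ)
    (hBunsafe : ∀ i ≤ ℓ, ∀ x ∈ Xu, 1 ≤ B i x)
    (hBstep : ∀ i < ℓ, ∀ x ∈ Xs \ Xu, ∫ w, B (i + 1) (f x w) ∂μW ≤ α i * B i x)
    (hBcmart : ∀ x ∈ Xs \ Xu, ∫ w, B ℓ (f x w) ∂μW ≤ B ℓ x + c)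
    (hBksuper : ∀ x ∈ Xs \ Xu,
      ∫ w, B ℓ (iterNoise f k x w) ∂(Measure.pi fun _ : Fin k => μW) ≤ B ℓ x)
    -- the solution process starting from x0 ∈ X0
    (x0 : X) (hx0 : x0 ∈ X0)
    (x : ℕ → Ω → X) (ℱ : Filtration ℕ m)
    (hadapted : ∀ t, Measurable[ℱ t] (x t))
    (hmeasx : ∀ t, Measurable (x t))
    (hinit : ∀ ω, x 0 ω = x0)
    (hinv : ∀ t ω, x t ω ∈ Xs)
    (hintB : ∀ i t, Integrable (fun ω => B i (x t ω)) μ)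
    (hMarkov : ∀ (t n : ℕ) (g : X → ℝ), Measurable g → (∃ C, ∀ y, |g y| ≤ C) →
      μ[(fun ω => g (x (t + n) ω))|ℱ t] =ᵐ[μ]
        fun ω => ∫ w, g (iterNoise f n (x t ω) w) ∂(Measure.pi fun _ : Fin n => μW)) :
    ENNReal.ofReal (1 - γ * (1 + (k : ℝ) * ∏ i ∈ Finset.range ℓ, α i +
        ∑ t ∈ Finset.range (ℓ - 1), ∏ i ∈ Finset.range (t + 1), α i) -
        (k : ℝ) * ((k : ℝ) - 1) * c / 2) ≤
      μ {ω | ∀ t, x t ω ∉ Xu} :=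
  stmt_11_general μ μW Xs X0 Xu hXu f hf ℓ k hk γ c hγ0 hc B hBmeas α hα hB0 hBinit hBunsafe hBstep
    hBcmart hBksuper x0 hx0 x ℱ hadapted hinit hinv hintB hMarkov
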